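/- For every k > 0, ρ ∈ (0,1), and all reals t* and p*, ∫_{t*}^{∞} g_{k,ρ}(ρt − p*)·φ(t) dt = exp(k²/2 − k·p*)·Φ_ρ(−p* + k, −t* + ρk) − Φ_ρ(−p*, −t*). -/

import Mathlib

/-! With σ = √(1 - ρ²) the bivariate density factors as
`biPdf ρ v t = φ t * σ⁻¹ φ ((v - ρ t) / σ)`, so `φ t * Φ ((ρ t - a) / σ) = ∫ v > a, biPdf ρ v t`;
integrating over `t > b`, Fubini and the reflection `(u, v) ↦ (-u, -v)` turn this into
`Φ_ρ(-a, -b)`. The term `e^{k x} Φ(…)` of `g` is brought into the same shape by exponential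
tilting, `e^{c t} φ t = e^{c² / 2} φ (t - c)` with `c = ρ k`, followed by the shift `t ↦ t - ρ k`.
-/

open MeasureTheory Real Set

/-- Standard normal density. -/
noncomputable def stdPhi (x : ℝ) : ℝ := (Real.sqrt (2 * Real.pi))⁻¹ * Real.exp (-x ^ 2 / 2)

/-- Standard normal CDF. -/
noncomputable def stdPhiCDF (x : ℝ) : ℝ := ∫ u in Set.Iic x, stdPhi u

/-- Standard bivariate normal density with correlation `ρ`. -/
noncomputable def biPdf (ρ x y : ℝ) : ℝ :=
  (2 * Real.pi * Real.sqrt (1 - ρ ^ 2))⁻¹ *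
    Real.exp (-(x ^ 2 - 2 * ρ * x * y + y ^ 2) / (2 * (1 - ρ ^ 2)))

/-- Standard bivariate normal CDF with correlation `ρ`. -/
noncomputable def biCDF (ρ x y : ℝ) : ℝ :=
  ∫ u in Set.Iic x, ∫ v in Set.Iic y, biPdf ρ u v

/-- Normalized expected-profit function `g_{k,ρ}`. -/
noncomputable def gkr (k ρ x : ℝ) : ℝ :=
  Real.exp (k * x + k ^ 2 * (1 - ρ ^ 2) / 2) *
      stdPhiCDF ((x + k * (1 - ρ ^ 2)) / Real.sqrt (1 - ρ ^ 2)) -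
    stdPhiCDF (x / Real.sqrt (1 - ρ ^ 2))

open ProbabilityTheory

lemma stdPhi_eq_gaussianPDFReal : stdPhi = gaussianPDFReal 0 1 := by
  ext x
  simp [stdPhi, gaussianPDFReal]

lemma stdPhi_nonneg (x : ℝ) : 0 ≤ stdPhi x := by
  rw [stdPhi_eq_gaussianPDFReal]
  exact gaussianPDFReal_nonneg _ _ _

lemma stdPhi_neg (x : ℝ) : stdPhi (-x) = stdPhi x := by
  simp [stdPhi]

lemma integrable_stdPhi : Integrable stdPhi :=
  stdPhi_eq_gaussianPDFReal ▸ integrable_gaussianPDFReal 0 1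

lemma integral_stdPhi : ∫ x, stdPhi x = 1 := by
  rw [stdPhi_eq_gaussianPDFReal]
  exact integral_gaussianPDFReal_eq_one 0 one_ne_zero

lemma exp_mul_mul_stdPhi (c t : ℝ) :
    exp (c * t) * stdPhi t = exp (c ^ 2 / 2) * stdPhi (t - c) := by
  simp only [stdPhi]
  rw [mul_left_comm, ← exp_add, mul_left_comm, ← exp_add]
  ring_nf

lemma stdPhiCDF_nonneg (x : ℝ) : 0 ≤ stdPhiCDF x :=
  setIntegral_nonneg measurableSet_Iic fun u _ ↦ stdPhi_nonneg u

lemma stdPhiCDF_le_one (x : ℝ) : stdPhiCDF x ≤ 1 :=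
  integral_stdPhi ▸ setIntegral_le_integral integrable_stdPhi (.of_forall stdPhi_nonneg)

lemma monotone_stdPhiCDF : Monotone stdPhiCDF := fun _ _ hxy ↦
  setIntegral_mono_set integrable_stdPhi.integrableOn (.of_forall stdPhi_nonneg)
    (Iic_subset_Iic.mpr hxy).eventuallyLE

lemma integrable_stdPhi_mul_stdPhiCDF_comp {f : ℝ → ℝ} (hf : Measurable f) :
    Integrable fun t ↦ stdPhi t * stdPhiCDF (f t) :=
  integrable_stdPhi.mul_bdd (monotone_stdPhiCDF.measurable.comp hf).aestronglyMeasurable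
    (c := 1) (.of_forall fun t ↦ by
      rw [Real.norm_of_nonneg (stdPhiCDF_nonneg _)]
      exact stdPhiCDF_le_one _)

lemma integral_comp_sub_right_Ioi {E : Type*} [NormedAddCommGroup E] [NormedSpace ℝ E]
    (f : ℝ → E) (a c : ℝ) : ∫ x in Ioi a, f (x - c) = ∫ x in Ioi (a - c), f x := by
  have := (measurePreserving_sub_right volume c).setIntegral_preimage_emb
    (measurableEmbedding_subRight c) f (Ioi (a - c))
  rwa [preimage_sub_const_Ioi, sub_add_cancel] at this

section Affine

variable {σ : ℝ} (m : ℝ)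

lemma integrable_stdPhi_affine (hσ : σ ≠ 0) :
    Integrable fun v ↦ σ⁻¹ * stdPhi ((v - m) / σ) :=
  ((integrable_stdPhi.comp_div hσ).comp_sub_right m).const_mul _

lemma integral_stdPhi_affine (hσ : 0 < σ) : ∫ v, σ⁻¹ * stdPhi ((v - m) / σ) = 1 := by
  rw [integral_const_mul, integral_sub_right_eq_self (fun v ↦ stdPhi (v / σ)),
    Measure.integral_comp_div, integral_stdPhi, abs_of_pos hσ, smul_eq_mul, mul_one,
    inv_mul_cancel₀ hσ.ne']

lemma setIntegral_Ioi_stdPhi_affine (hσ : 0 < σ) (a : ℝ) :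
    ∫ v in Ioi a, σ⁻¹ * stdPhi ((v - m) / σ) = stdPhiCDF ((m - a) / σ) := by
  calc ∫ v in Ioi a, σ⁻¹ * stdPhi ((v - m) / σ)
      = σ⁻¹ * ∫ v in Ioi (a - m), stdPhi (σ⁻¹ * v) := by
        rw [integral_const_mul, ← integral_comp_sub_right_Ioi]
        simp_rw [div_eq_inv_mul]
    _ = ∫ v in Iic (-(σ⁻¹ * (a - m))), stdPhi (-v) := by
        rw [integral_comp_mul_left_Ioi _ _ (inv_pos.mpr hσ), inv_inv, smul_eq_mul,
          inv_mul_cancel_left₀ hσ.ne', integral_comp_neg_Iic, neg_neg]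
    _ = stdPhiCDF ((m - a) / σ) := by
        simp_rw [stdPhi_neg]
        congr 3
        ring

end Affine

section Bivariate

variable {ρ : ℝ}

lemma biPdf_neg_neg (u v : ℝ) : biPdf ρ (-u) (-v) = biPdf ρ u v := by
  unfold biPdf; ring_nf

lemma biCDF_neg_neg (a b : ℝ) :
    biCDF ρ (-a) (-b) = ∫ u in Ioi a, ∫ v in Ioi b, biPdf ρ u v := by
  simp only [biCDF, ← integral_comp_neg_Ioi, biPdf_neg_neg]

lemma biPdf_nonneg (u v : ℝ) : 0 ≤ biPdf ρ u v := by
  unfold biPdf; positivity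

lemma biPdf_eq_stdPhi_mul (hρ : ρ ^ 2 < 1) (v t : ℝ) :
    biPdf ρ v t = stdPhi t * ((√(1 - ρ ^ 2))⁻¹ * stdPhi ((v - ρ * t) / √(1 - ρ ^ 2))) := by
  have hs : 0 < 1 - ρ ^ 2 := by linarith
  have h2π : √(2 * π) * √(2 * π) = 2 * π := Real.mul_self_sqrt (by positivity)
  have hconst : (2 * π * √(1 - ρ ^ 2))⁻¹
      = (√(2 * π))⁻¹ * ((√(1 - ρ ^ 2))⁻¹ * (√(2 * π))⁻¹) := calc
    _ = (√(2 * π) * √(2 * π) * √(1 - ρ ^ 2))⁻¹ := by rw [h2π]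
    _ = _ := by ring
  have hexp : exp (-(v ^ 2 - 2 * ρ * v * t + t ^ 2) / (2 * (1 - ρ ^ 2)))
      = exp (-t ^ 2 / 2) * exp (-((v - ρ * t) / √(1 - ρ ^ 2)) ^ 2 / 2) := by
    rw [← exp_add, div_pow, Real.sq_sqrt hs.le]
    congr 1
    field_simp
    ring
  unfold biPdf stdPhi
  rw [hconst, hexp]
  ring

lemma integrable_biPdf (hρ : ρ ^ 2 < 1) :
    Integrable (fun p : ℝ × ℝ ↦ biPdf ρ p.1 p.2) (volume.prod volume) := by
  have hσ : 0 < √(1 - ρ ^ 2) := Real.sqrt_pos.mpr (by linarith)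
  rw [integrable_prod_iff' (by unfold biPdf; fun_prop)]
  simp_rw [Real.norm_of_nonneg (biPdf_nonneg _ _), biPdf_eq_stdPhi_mul hρ]
  refine ⟨.of_forall fun t ↦ (integrable_stdPhi_affine _ hσ.ne').const_mul _, ?_⟩
  simpa only [integral_const_mul, integral_stdPhi_affine _ hσ, mul_one] using integrable_stdPhi

lemma setIntegral_Ioi_biPdf (hρ : ρ ^ 2 < 1) (a t : ℝ) :
    ∫ v in Ioi a, biPdf ρ v t = stdPhi t * stdPhiCDF ((ρ * t - a) / √(1 - ρ ^ 2)) := by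
  simp_rw [biPdf_eq_stdPhi_mul hρ]
  rw [integral_const_mul, setIntegral_Ioi_stdPhi_affine _ (Real.sqrt_pos.mpr (by linarith))]

lemma setIntegral_Ioi_stdPhi_mul_stdPhiCDF (hρ : ρ ^ 2 < 1) (a b : ℝ) :
    ∫ t in Ioi b, stdPhi t * stdPhiCDF ((ρ * t - a) / √(1 - ρ ^ 2)) = biCDF ρ (-a) (-b) := by
  have hintegrable : Integrable (fun p : ℝ × ℝ ↦ biPdf ρ p.2 p.1)
      ((volume.restrict (Ioi b)).prod (volume.restrict (Ioi a))) := by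
    rw [Measure.prod_restrict]
    exact (integrable_biPdf hρ).swap.restrict
  simp_rw [← setIntegral_Ioi_biPdf hρ]
  rw [integral_integral_swap hintegrable, biCDF_neg_neg]

end Bivariate

lemma gkr_mul_stdPhi (k ρ p t : ℝ) :
    gkr k ρ (ρ * t - p) * stdPhi t
      = exp (k ^ 2 / 2 - k * p) * (stdPhi (t - ρ * k)
          * stdPhiCDF ((ρ * (t - ρ * k) - (p - k)) / √(1 - ρ ^ 2)))
        - stdPhi t * stdPhiCDF ((ρ * t - p) / √(1 - ρ ^ 2)) := by
  have htilt : exp (k * (ρ * t - p) + k ^ 2 * (1 - ρ ^ 2) / 2) * stdPhi t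
      = exp (k ^ 2 / 2 - k * p) * stdPhi (t - ρ * k) := by
    rw [show k * (ρ * t - p) + k ^ 2 * (1 - ρ ^ 2) / 2
        = (k ^ 2 / 2 - k * p - (ρ * k) ^ 2 / 2) + (ρ * k) * t by ring,
      exp_add, mul_assoc, exp_mul_mul_stdPhi, ← mul_assoc, ← exp_add]
    ring_nf
  rw [gkr, sub_mul, mul_right_comm, htilt, mul_assoc]
  ring_nf

theorem expected_joint_profit_general
    (k ρ tstar pstar : ℝ) (hρ : ρ ∈ Set.Ioo (0 : ℝ) 1) :
    ∫ t in Set.Ici tstar, gkr k ρ (ρ * t - pstar) * stdPhi t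
      = Real.exp (k ^ 2 / 2 - k * pstar) * biCDF ρ (-pstar + k) (-tstar + ρ * k)
        - biCDF ρ (-pstar) (-tstar) := by
  have hρ2 : ρ ^ 2 < 1 := by nlinarith [hρ.1, hρ.2]
  have hintegrable (c : ℝ) : Integrable fun t ↦ stdPhi t * stdPhiCDF ((ρ * t - c) / √(1 - ρ ^ 2)) :=
    integrable_stdPhi_mul_stdPhiCDF_comp (by fun_prop)
  rw [integral_Ici_eq_integral_Ioi]
  simp_rw [gkr_mul_stdPhi]
  rw [integral_sub (((hintegrable _).comp_sub_right _).const_mul _).integrableOn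
    (hintegrable _).integrableOn, integral_const_mul]
  simp only [integral_comp_sub_right_Ioi
    fun t ↦ stdPhi t * stdPhiCDF ((ρ * t - (pstar - k)) / √(1 - ρ ^ 2)),
    setIntegral_Ioi_stdPhi_mul_stdPhiCDF hρ2, neg_sub', sub_neg_eq_add]

theorem expected_joint_profit
    (k ρ tstar pstar : ℝ) (hk : 0 < k) (hρ : ρ ∈ Set.Ioo (0 : ℝ) 1) :
    ∫ t in Set.Ici tstar, gkr k ρ (ρ * t - pstar) * stdPhi t
      = Real.exp (k ^ 2 / 2 - k * pstar) * biCDF ρ (-pstar + k) (-tstar + ρ * k)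
        - biCDF ρ (-pstar) (-tstar) :=
  expected_joint_profit_general k ρ tstar pstar hρ
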